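/- Let S be a semiring such that every left S-semimodule embeds in an i-injective left S-semimodule, and suppose every direct sum of i-injective left S-semimodules is i-injective relative to S (i.e., S-i-injective). Then S is left k-Noetherian: every ascending chain of subtractive left ideals of S terminates. -/

import Mathlib

universe u

/-- A left ideal `N ≤ S` (a submodule of `S` as a left `S`-semimodule) is subtractive. -/
def Subtractive {S : Type u} [Semiring S] (N : Submodule S S) : Prop :=
  ∀ s : S, ∀ x ∈ N, ∀ y ∈ N, s + x = y → s ∈ N

/-- An `S`-linear map `f : L → M` is a normal monomorphism: it is injective (hence
`k`-normal) and `i`-normal, i.e. its image coincides with its subtractive closure in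
`M`. -/
def IsNormalMono {S : Type u} [Semiring S] {L M : Type u} [AddCommMonoid L] [Module S L]
    [AddCommMonoid M] [Module S M] (f : L →ₗ[S] M) : Prop :=
  Function.Injective f ∧
    ∀ m : M, ∀ x ∈ Set.range f, ∀ y ∈ Set.range f, m + x = y → m ∈ Set.range f

/-- `J` is `M`-`i`-injective: every `S`-linear map `L → J` extends along every normal
monomorphism `L → M`. -/
def MIInjective (S : Type u) [Semiring S] (M : Type u) [AddCommMonoid M] [Module S M]
    (J : Type u) [AddCommMonoid J] [Module S J] : Prop :=
  ∀ (L : Type u) (_ : AddCommMonoid L) (_ : Module S L) (f : L →ₗ[S] M),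
    IsNormalMono f → ∀ g : L →ₗ[S] J, ∃ h : M →ₗ[S] J, ∀ l : L, h (f l) = g l

/-- `J` is `i`-injective: it is `M`-`i`-injective for every left `S`-semimodule `M`. -/
def IInjective (S : Type u) [Semiring S] (J : Type u) [AddCommMonoid J] [Module S J] :
    Prop :=
  ∀ (M : Type u) (_ : AddCommMonoid M) (_ : Module S M), MIInjective S M J



namespace Stmt19Aux

variable {S : Type u} [Semiring S]

/-- Bourne congruence of a left ideal. -/
def bourneSetoid (N : Submodule S S) : Setoid S where
  r x y := ∃ a ∈ N, ∃ b ∈ N, x + a = y + b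
  iseqv := by
    refine ⟨fun x => ⟨0, N.zero_mem, 0, N.zero_mem, rfl⟩, ?_, ?_⟩
    · rintro x y ⟨a, ha, b, hb, h⟩; exact ⟨b, hb, a, ha, h.symm⟩
    · rintro x y z ⟨a, ha, b, hb, h1⟩ ⟨c, hc, d, hd, h2⟩
      refine ⟨a + c, N.add_mem ha hc, d + b, N.add_mem hd hb, ?_⟩
      calc x + (a + c) = (x + a) + c := by rw [add_assoc]
        _ = (y + c) + b := by rw [h1]; ac_rfl
        _ = (z + d) + b := by rw [h2]
        _ = z + (d + b) := by rw [add_assoc]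

/-- Bourne quotient. -/
def Q (N : Submodule S S) : Type u := Quotient (bourneSetoid N)

variable (N : Submodule S S)

def Q.mk (x : S) : Q N := Quotient.mk (bourneSetoid N) x

lemma Q.mk_eq_mk {x y : S} : (Q.mk N x = Q.mk N y) ↔ ∃ a ∈ N, ∃ b ∈ N, x + a = y + b :=
  Quotient.eq

instance : Zero (Q N) := ⟨Q.mk N 0⟩

instance : Add (Q N) :=
  ⟨Quotient.map₂ (· + ·) (by
    rintro x x' ⟨a, ha, b, hb, h1⟩ y y' ⟨c, hc, d, hd, h2⟩
    refine ⟨a + c, N.add_mem ha hc, b + d, N.add_mem hb hd, ?_⟩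
    calc x + y + (a + c) = (x + a) + (y + c) := by ac_rfl
      _ = (x' + b) + (y' + d) := by rw [h1, h2]
      _ = x' + y' + (b + d) := by ac_rfl)⟩

instance : SMul S (Q N) :=
  ⟨fun s => Quotient.map (fun x => s * x) (by
    rintro x y ⟨a, ha, b, hb, h⟩
    refine ⟨s • a, N.smul_mem s ha, s • b, N.smul_mem s hb, ?_⟩
    simp only [smul_eq_mul, ← mul_add, h])⟩

lemma Q.mk_add (x y : S) : Q.mk N x + Q.mk N y = Q.mk N (x + y) := rfl
lemma Q.mk_smul (s x : S) : s • Q.mk N x = Q.mk N (s * x) := rfl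
lemma Q.zero_def : (0 : Q N) = Q.mk N 0 := rfl

instance : AddCommMonoid (Q N) where
  add_assoc a b c := by
    induction a using Quotient.ind; induction b using Quotient.ind; induction c using Quotient.ind
    exact congrArg (Q.mk N) (add_assoc _ _ _)
  zero_add a := by induction a using Quotient.ind; exact congrArg (Q.mk N) (zero_add _)
  add_zero a := by induction a using Quotient.ind; exact congrArg (Q.mk N) (add_zero _)
  add_comm a b := by
    induction a using Quotient.ind; induction b using Quotient.ind
    exact congrArg (Q.mk N) (add_comm _ _)
  nsmul := nsmulRec

instance : Module S (Q N) where
  one_smul a := by induction a using Quotient.ind; exact congrArg (Q.mk N) (one_mul _)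
  mul_smul r s a := by induction a using Quotient.ind; exact congrArg (Q.mk N) (mul_assoc _ _ _)
  smul_zero s := congrArg (Q.mk N) (mul_zero _)
  smul_add s a b := by
    induction a using Quotient.ind; induction b using Quotient.ind
    exact congrArg (Q.mk N) (mul_add _ _ _)
  add_smul r s a := by induction a using Quotient.ind; exact congrArg (Q.mk N) (add_mul _ _ _)
  zero_smul a := by induction a using Quotient.ind; exact congrArg (Q.mk N) (zero_mul _)

/-- The quotient map as a linear map. -/
def Q.mkL : S →ₗ[S] Q N where
  toFun := Q.mk N
  map_add' _ _ := rfl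
  map_smul' s x := (Q.mk_smul N s x).symm

lemma Q.mk_eq_zero_of_mem {x : S} (hx : x ∈ N) : Q.mk N x = 0 := by
  rw [Q.zero_def, Q.mk_eq_mk]
  exact ⟨0, N.zero_mem, x, hx, by rw [add_zero, zero_add]⟩

lemma Q.mem_of_mk_eq_zero (hN : Subtractive N) {x : S} (h : Q.mk N x = 0) : x ∈ N := by
  rw [Q.zero_def, Q.mk_eq_mk] at h
  obtain ⟨a, ha, b, hb, hab⟩ := h
  rw [zero_add] at hab
  exact hN x a ha b hb hab

/-- Build a direct sum element from a function eventually zero. -/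
noncomputable def mkDS (J : ULift.{u} ℕ → Type u) [∀ n, AddCommMonoid (J n)]
    (v : ∀ n, J n) (hv : ∃ N : ℕ, ∀ m : ℕ, N ≤ m → v (ULift.up m) = 0) :
    DirectSum (ULift.{u} ℕ) J :=
  ⟨v, Trunc.mk ⟨(Multiset.range (hv.choose + 1)).map ULift.up, fun i => by
    rcases lt_or_ge i.down (hv.choose + 1) with h | h
    · exact Or.inl (Multiset.mem_map.2 ⟨i.down, Multiset.mem_range.2 h, rfl⟩)
    · exact Or.inr (by simpa using hv.choose_spec i.down (by omega))⟩⟩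

lemma mkDS_apply (J : ULift.{u} ℕ → Type u) [∀ n, AddCommMonoid (J n)]
    (v : ∀ n, J n) (hv) (n : ULift.{u} ℕ) : mkDS J v hv n = v n := rfl

end Stmt19Aux

/-- if every left `S`-semimodule embeds in an `i`-injective left
`S`-semimodule and every direct sum of `S`-`i`-injective left `S`-semimodules is
`S`-`i`-injective, then `S` is left `k`-Noetherian: every ascending chain of
subtractive left ideals of `S` terminates. -/
theorem stmt_19 (S : Type u) [Semiring S]
    (henough : ∀ (M : Type u) (_ : AddCommMonoid M) (_ : Module S M),
      ∃ (J : Type u) (_ : AddCommMonoid J) (_ : Module S J),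
        IInjective S J ∧ ∃ e : M →ₗ[S] J, Function.Injective e)
    (hds : ∀ (ι : Type u) (_ : DecidableEq ι) (J : ι → Type u)
      (_ : ∀ i, AddCommMonoid (J i)) (_ : ∀ i, Module S (J i)),
      (∀ i, MIInjective S S (J i)) → MIInjective S S (DirectSum ι J)) :
    ∀ f : ℕ → Submodule S S, (∀ n, Subtractive (f n)) → Monotone f →
      ∃ n, ∀ m, n ≤ m → f m = f n := by
  classical
  intro f hsub hmono
  choose J i1 i2 hIJ e he using
    fun n : ULift.{u} ℕ => henough (Stmt19Aux.Q (f n.down)) _ _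
  letI : ∀ n, AddCommMonoid (J n) := i1
  letI : ∀ n, Module S (J n) := i2
  set I : Submodule S S := ⨆ n, f n with hI
  have hdir : Directed (· ≤ ·) f := hmono.directed_le
  have memI : ∀ x : S, x ∈ I ↔ ∃ n, x ∈ f n := fun x =>
    Submodule.mem_iSup_of_directed f hdir
  -- the map into the direct sum
  have hv : ∀ x : ↥I, ∃ N : ℕ, ∀ m : ℕ, N ≤ m →
      (fun n : ULift.{u} ℕ => e n (Stmt19Aux.Q.mkL (f n.down) x.1)) (ULift.up m) = 0 := by
    intro x
    obtain ⟨n0, hn0⟩ := (memI x.1).1 x.2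
    refine ⟨n0, fun m hm => ?_⟩
    have : x.1 ∈ f m := hmono hm hn0
    show e (ULift.up m) (Stmt19Aux.Q.mk (f m) x.1) = 0
    rw [Stmt19Aux.Q.mk_eq_zero_of_mem _ this, map_zero]
  let g : ↥I →ₗ[S] DirectSum (ULift.{u} ℕ) J :=
    { toFun := fun x => Stmt19Aux.mkDS J (fun n : ULift.{u} ℕ => e n (Stmt19Aux.Q.mkL (f n.down) x.1)) (hv x)
      map_add' := by
        intro x y
        refine DFinsupp.ext fun n => ?_
        rw [DirectSum.add_apply]
        show e n (Stmt19Aux.Q.mkL (f n.down) (x.1 + y.1)) =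
          e n (Stmt19Aux.Q.mkL (f n.down) x.1) + e n (Stmt19Aux.Q.mkL (f n.down) y.1)
        rw [map_add, map_add]
      map_smul' := by
        intro s x
        refine DFinsupp.ext fun n => ?_
        rw [RingHom.id_apply, DFinsupp.smul_apply]
        show e n (Stmt19Aux.Q.mkL (f n.down) (s • x.1)) =
          s • e n (Stmt19Aux.Q.mkL (f n.down) x.1)
        rw [map_smul, map_smul] }
  have hnm : IsNormalMono I.subtype := by
    constructor
    · exact I.injective_subtype
    · rintro m x ⟨a, rfl⟩ y ⟨b, rfl⟩ hxy
      obtain ⟨na, hna⟩ := (memI a.1).1 a.2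
      obtain ⟨nb, hnb⟩ := (memI b.1).1 b.2
      have hm : m ∈ f (max na nb) :=
        hsub (max na nb) m a.1 (hmono (le_max_left na nb) hna)
          b.1 (hmono (le_max_right na nb) hnb) hxy
      exact ⟨⟨m, (memI m).2 ⟨max na nb, hm⟩⟩, rfl⟩
  obtain ⟨h, hh⟩ := hds (ULift.{u} ℕ) inferInstance J i1 i2
    (fun n => hIJ n S inferInstance inferInstance) ↥I inferInstance inferInstance
    I.subtype hnm g
  set D : DirectSum (ULift.{u} ℕ) J := h 1 with hD
  obtain ⟨⟨s, hs⟩, -⟩ := Trunc.exists_rep D.support'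
  set N : ℕ := (s.map ULift.down).toFinset.sup id + 1 with hN
  have hDzero : ∀ m : ℕ, N ≤ m → D (ULift.up m) = 0 := by
    intro m hm
    rcases hs (ULift.up m) with hmem | h0
    · exfalso
      have : m ∈ (s.map ULift.down).toFinset :=
        Multiset.mem_toFinset.2 (Multiset.mem_map.2 ⟨ULift.up m, hmem, rfl⟩)
      have := Finset.le_sup (f := id) this
      simp only [id] at this
      omega
    · exact h0
  have key : ∀ x : S, x ∈ I → x ∈ f N := by
    intro x hx
    have h1 : h x = g ⟨x, hx⟩ := (hh ⟨x, hx⟩).symm ▸ rfl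
    have h2 : h x = x • D := by
      rw [hD, ← map_smul, smul_eq_mul, mul_one]
    have h3 : g ⟨x, hx⟩ (ULift.up N) = 0 := by
      rw [← h1, h2, DFinsupp.smul_apply, hDzero N le_rfl, smul_zero]
    have h4 : e (ULift.up N) (Stmt19Aux.Q.mkL (f N) x) = 0 := h3
    rw [← map_zero (e (ULift.up N))] at h4
    have h5 := he (ULift.up N) h4
    exact Stmt19Aux.Q.mem_of_mk_eq_zero (f N) (hsub N) h5
  refine ⟨N, fun m hm => le_antisymm ?_ (hmono hm)⟩
  intro x hx
  exact key x ((memI x).2 ⟨m, hx⟩)
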